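/- arXiv:1404.5238 — 2 statements merged into one kernel-verified Lean document; each statement's English description precedes it below -/
import Mathlib

section
/- Let π_X be a π_A-representation of a Hilbert A-module X on Krein B-modules (H₁, J₁) and (H₂, J₂), i.e., π_X : X → L(H₁, H₂) and π_A : A → L(H₁) is a representation with π_X(x)^# π_X(y) = π_A(⟨x,y⟩) for all x, y ∈ X, where T^# = J₁ T* J₂. If the closed linear span of π_X(X) H₁ equals H₂, then π_X(x a) = π_X(x) π_A(a) for all x ∈ X and a ∈ A. -/
/-- The Hilbert C⋆-module class as it stood in Mathlib (Dec 2024): a right `A`-module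
(action of `Aᵐᵒᵖ`) with an `A`-valued inner product, `A`-linear on the right. -/
class RightCStarModule (A E : Type*) [NonUnitalSemiring A] [StarRing A]
    [Module ℂ A] [AddCommGroup E] [Module ℂ E] [PartialOrder A] [SMul Aᵐᵒᵖ E] [Norm A] [Norm E]
    extends Inner A E where
  inner_add_right {x} {y} {z} : inner x (y + z) = inner x y + inner x z
  inner_self_nonneg {x} : 0 ≤ inner x x
  inner_self {x} : inner x x = 0 ↔ x = 0
  inner_op_smul_right {a : A} {x y : E} : inner x (MulOpposite.op a • y) = inner x y * a
  inner_smul_right_complex {z : ℂ} {x} {y} : inner x (z • y) = z • inner x y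
  star_inner x y : star (inner x y) = inner y x
  norm_eq_sqrt_norm_inner_self x : ‖x‖ = √‖inner x x‖

/-! With `d = π_X(x a) ζ - π_X(x) π_A(a) ζ`, the relation `π_X(x)^# π_X(y) = π_A ⟨x, y⟩` and
`π_A(a*) = π_A(a)^#` give `⟨J₂ d, π_X(y) ξ⟩ = 0` for all `y, ξ`. The inner product is continuous,
so by nondegeneracy `J₂ d = 0`, and `J₂` is injective. -/

namespace RightCStarModule

section Algebra

variable {A E : Type*} [NonUnitalRing A] [StarRing A] [AddCommGroup E] [Module ℂ A]
  [Module ℂ E] [PartialOrder A] [SMul Aᵐᵒᵖ E] [Norm A] [Norm E] [RightCStarModule A E]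

lemma inner_op_smul_left {a : A} {x y : E} :
    inner A (MulOpposite.op a • x) y = star a * inner A x y := by
  rw [← star_inner, inner_op_smul_right, star_mul, star_inner]

lemma inner_sub_right {x y z : E} : inner A x (y - z) = inner A x y - inner A x z :=
  eq_sub_of_add_eq (by rw [← inner_add_right, sub_add_cancel])

lemma inner_sub_left {x y z : E} : inner A (x - y) z = inner A x z - inner A y z := by
  rw [← star_inner, inner_sub_right, star_sub, star_inner, star_inner]

end Algebra

section Topology

variable {A E : Type*} [CStarAlgebra A] [PartialOrder A] [StarOrderedRing A]
  [NormedAddCommGroup E] [NormedSpace ℂ E] [SMul Aᵐᵒᵖ E] [RightCStarModule A E]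

/-- Transports the Cauchy–Schwarz inequality of `CStarModule` to right Hilbert modules. -/
noncomputable abbrev toCStarModuleMulOpposite : CStarModule Aᵐᵒᵖ E where
  inner x y := MulOpposite.op (inner A x y)
  inner_add_right := congrArg MulOpposite.op inner_add_right
  inner_self_nonneg := inner_self_nonneg (A := A)
  inner_self := MulOpposite.op_eq_zero_iff _ |>.trans inner_self
  inner_op_smul_right {a _ _} := by
    rw [← MulOpposite.op_unop a, inner_op_smul_right, MulOpposite.op_mul]
  inner_smul_right_complex := by
    intro z x y
    rw [inner_smul_right_complex, MulOpposite.op_smul]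
  star_inner x y := by
    rw [← MulOpposite.op_star, star_inner]
  norm_eq_sqrt_norm_inner_self := norm_eq_sqrt_norm_inner_self (A := A)

lemma continuous_inner : Continuous (fun p : E × E => inner A p.1 p.2) := by
  let := (toCStarModuleMulOpposite : CStarModule Aᵐᵒᵖ E)
  exact MulOpposite.continuous_unop.comp (CStarModule.continuous_inner (A := Aᵐᵒᵖ))

noncomputable def innerRightCLM (v : E) : E →L[ℂ] A where
  toFun y := inner A v y
  map_add' _ _ := inner_add_right
  map_smul' _ _ := inner_smul_right_complex
  cont := continuous_inner.comp (continuous_const.prodMk continuous_id)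

lemma eq_of_forall_inner_eq_of_dense_span {S : Set E}
    (hS : (Submodule.span ℂ S).topologicalClosure = ⊤) {u w : E}
    (h : ∀ s ∈ S, inner A u s = inner A w s) : u = w := by
  have hS_ker : (Submodule.span ℂ S).topologicalClosure ≤
      LinearMap.ker (innerRightCLM (A := A) (u - w) : E →ₗ[ℂ] A) :=
    Submodule.topologicalClosure_minimal _
      (Submodule.span_le.2 fun s hs => by
        change inner A (u - w) s = 0
        rw [inner_sub_left, h s hs, sub_self])
      (innerRightCLM (u - w)).isClosed_ker
  exact sub_eq_zero.1 <| inner_self.1 <| hS_ker (hS ▸ Submodule.mem_top)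

end Topology

end RightCStarModule

lemma inner_apply_J_apply_of_rel {A B X H₁ H₂ : Type*}
    [CStarAlgebra A] [PartialOrder A] [CStarAlgebra B] [PartialOrder B]
    [NormedAddCommGroup X] [NormedSpace ℂ X] [SMul Aᵐᵒᵖ X] [RightCStarModule A X]
    [NormedAddCommGroup H₁] [NormedSpace ℂ H₁] [SMul Bᵐᵒᵖ H₁] [RightCStarModule B H₁]
    [NormedAddCommGroup H₂] [NormedSpace ℂ H₂] [SMul Bᵐᵒᵖ H₂] [RightCStarModule B H₂]
    {J₁ : H₁ →L[ℂ] H₁} {J₂ : H₂ →L[ℂ] H₂} (hJ₁2 : ∀ ξ : H₁, J₁ (J₁ ξ) = ξ)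
    {πA : A → H₁ →L[ℂ] H₁} {πX : X → H₁ →L[ℂ] H₂} {πXadj : X → H₂ →L[ℂ] H₁}
    (hπXadj : ∀ (x : X) (ξ : H₁) (η : H₂),
      (inner B (πX x ξ) η : B) = inner B ξ (πXadj x η))
    (hrel : ∀ x y : X, (J₁ ∘L πXadj x ∘L J₂) ∘L πX y = πA (inner A x y))
    (x y : X) (ζ ξ : H₁) :
    inner B (πX x ζ) (J₂ (πX y ξ)) = inner B ζ (J₁ (πA (inner A x y) ξ)) := by
  rw [hπXadj, ← hrel]
  simp only [ContinuousLinearMap.comp_apply, hJ₁2]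

theorem piX_module_map_of_nondegenerate_general
    {A B X H₁ H₂ : Type*}
    [CStarAlgebra A] [PartialOrder A]
    [CStarAlgebra B] [PartialOrder B] [StarOrderedRing B]
    [NormedAddCommGroup X] [NormedSpace ℂ X] [SMul Aᵐᵒᵖ X] [RightCStarModule A X]
    [NormedAddCommGroup H₁] [NormedSpace ℂ H₁] [SMul Bᵐᵒᵖ H₁] [RightCStarModule B H₁]
    [NormedAddCommGroup H₂] [NormedSpace ℂ H₂] [SMul Bᵐᵒᵖ H₂] [RightCStarModule B H₂]
    (J₁ : H₁ →L[ℂ] H₁) (J₂ : H₂ →L[ℂ] H₂)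
    (hJ₂sym : ∀ x y : H₂, (inner B (J₂ x) y : B) = inner B x (J₂ y))
    (hJ₁2 : ∀ x : H₁, J₁ (J₁ x) = x) (hJ₂2 : ∀ x : H₂, J₂ (J₂ x) = x)
    (πA : A → H₁ →L[ℂ] H₁) (πAadj : A → H₁ →L[ℂ] H₁)
    (hπAadj : ∀ (a : A) (ξ η : H₁), (inner B (πA a ξ) η : B) = inner B ξ (πAadj a η))
    (hπAmul : ∀ a b : A, πA (a * b) = πA a ∘L πA b)
    (hπAstar : ∀ a : A, πA (star a) = J₁ ∘L πAadj a ∘L J₁)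
    (πX : X → H₁ →L[ℂ] H₂) (πXadj : X → H₂ →L[ℂ] H₁)
    (hπXadj : ∀ (x : X) (ξ : H₁) (η : H₂),
      (inner B (πX x ξ) η : B) = inner B ξ (πXadj x η))
    (hrel : ∀ x y : X, (J₁ ∘L πXadj x ∘L J₂) ∘L πX y = πA (inner A x y))
    (hdense : (Submodule.span ℂ {ζ : H₂ | ∃ (x : X) (ξ : H₁),
      ζ = πX x ξ}).topologicalClosure = ⊤) :
    ∀ (x : X) (a : A), πX (MulOpposite.op a • x) = πX x ∘L πA a := by
  intro x a
  ext ζ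
  have hinner := inner_apply_J_apply_of_rel hJ₁2 hπXadj hrel
  apply Function.LeftInverse.injective hJ₂2
  refine RightCStarModule.eq_of_forall_inner_eq_of_dense_span (A := B) hdense ?_
  rintro _ ⟨y, ξ, rfl⟩
  calc inner B (J₂ (πX (MulOpposite.op a • x) ζ)) (πX y ξ)
      = inner B ζ (J₁ (πA (star a * inner A x y) ξ)) := by
        rw [hJ₂sym, hinner, RightCStarModule.inner_op_smul_left]
    _ = inner B ζ (πAadj a (J₁ (πA (inner A x y) ξ))) := by
        simp only [hπAmul, hπAstar, ContinuousLinearMap.comp_apply, hJ₁2]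
    _ = inner B (J₂ ((πX x ∘L πA a) ζ)) (πX y ξ) := by
        rw [hJ₂sym, ContinuousLinearMap.comp_apply, hinner, hπAadj]

/-- If `π_X` is a nondegenerate `π_A`-representation of a Hilbert `A`-module `X` on
Krein `B`-modules `(H₁,J₁)` and `(H₂,J₂)` (i.e. `π_X(x)^# π_X(y) = π_A ⟨x,y⟩` with
`T^# = J₁ T* J₂`, and the span of `π_X(X) H₁` is dense in `H₂`), then
`π_X (x a) = π_X x ∘ π_A a` for all `x : X`, `a : A`. -/
theorem piX_module_map_of_nondegenerate
    {A B X H₁ H₂ : Type*}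
    [CStarAlgebra A] [PartialOrder A] [StarOrderedRing A]
    [CStarAlgebra B] [PartialOrder B] [StarOrderedRing B]
    [NormedAddCommGroup X] [NormedSpace ℂ X] [SMul Aᵐᵒᵖ X] [RightCStarModule A X]
    [NormedAddCommGroup H₁] [NormedSpace ℂ H₁] [SMul Bᵐᵒᵖ H₁] [RightCStarModule B H₁]
    [NormedAddCommGroup H₂] [NormedSpace ℂ H₂] [SMul Bᵐᵒᵖ H₂] [RightCStarModule B H₂]
    (J₁ : H₁ →L[ℂ] H₁) (J₂ : H₂ →L[ℂ] H₂)
    (hJ₁sym : ∀ x y : H₁, (inner B (J₁ x) y : B) = inner B x (J₁ y))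
    (hJ₂sym : ∀ x y : H₂, (inner B (J₂ x) y : B) = inner B x (J₂ y))
    (hJ₁2 : ∀ x : H₁, J₁ (J₁ x) = x) (hJ₂2 : ∀ x : H₂, J₂ (J₂ x) = x)
    (πA : A → H₁ →L[ℂ] H₁) (πAadj : A → H₁ →L[ℂ] H₁)
    (hπAadj : ∀ (a : A) (ξ η : H₁), (inner B (πA a ξ) η : B) = inner B ξ (πAadj a η))
    (hπAmul : ∀ a b : A, πA (a * b) = πA a ∘L πA b)
    (hπAstar : ∀ a : A, πA (star a) = J₁ ∘L πAadj a ∘L J₁)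
    (πX : X → H₁ →L[ℂ] H₂) (πXadj : X → H₂ →L[ℂ] H₁)
    (hπXadj : ∀ (x : X) (ξ : H₁) (η : H₂),
      (inner B (πX x ξ) η : B) = inner B ξ (πXadj x η))
    (hrel : ∀ x y : X, (J₁ ∘L πXadj x ∘L J₂) ∘L πX y = πA (inner A x y))
    (hdense : (Submodule.span ℂ {ζ : H₂ | ∃ (x : X) (ξ : H₁),
      ζ = πX x ξ}).topologicalClosure = ⊤) :
    ∀ (x : X) (a : A), πX (MulOpposite.op a • x) = πX x ∘L πA a :=
  piX_module_map_of_nondegenerate_general J₁ J₂ hJ₂sym hJ₁2 hJ₂2 πA πAadj hπAadj hπAmul hπAstar πX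
    πXadj hπXadj hrel hdense
end

section
/- Let Φ : X → L(H₁,H₂) be a (u′,u)-covariant φ-map with respect to an action η of a locally compact group G, where u is simultaneously unitary and pseudo-unitary on the Krein space (H₁,J₁). Then in the KSGNS construction (with K₁ the completion of (A ⊗ H₁)/N_φ), for each t ∈ G the formula v_t(a ⊗ ξ + N_φ) = β^η_t(a) ⊗ u_t(ξ) + N_φ defines a well-defined operator v_t on K₁ which is simultaneously unitary and pseudo-unitary with respect to J₃, the map t ↦ v_t is a group homomorphism, and V_Φ u_t = v_t V_Φ for all t ∈ G. -/
/-!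
Since `φ` is covariant and `β_t` commutes with `α` and `*`, the map
`a ⊗ ξ ↦ β_t(a) ⊗ u_t ξ` preserves the KSGNS inner product; it therefore extends from the dense
span of the elementary tensors to an isometry `v_t` of `K₁`. Uniqueness of extensions makes
`t ↦ v_t` a representation, so each isometry `v_t` has the inverse `v_{t⁻¹}` and is unitary.
Since `J₃` is an involution commuting with every `v_t`, unitarity is pseudo-unitarity.
-/

open ContinuousLinearMap Finsupp

theorem map_one_of_map_mul_of_surjective {M N : Type*} [MulOneClass M] [MulOneClass N]
    {f : M → N} (hmul : ∀ x y, f (x * y) = f x * f y) (hf : Function.Surjective f) :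
    f 1 = 1 := by
  obtain ⟨x, hx⟩ := hf 1
  calc f 1 = f 1 * f x := by rw [hx, mul_one]
    _ = 1 := by rw [← hmul, one_mul, hx]

section InnerEq

variable {𝕜 ι E F : Type*} [RCLike 𝕜]
  [NormedAddCommGroup E] [InnerProductSpace 𝕜 E] [NormedAddCommGroup F] [InnerProductSpace 𝕜 F]
  {g₀ : ι → E} {g₁ : ι → F}

theorem inner_linearCombination_eq_of_inner_eq
    (h : ∀ i j, inner 𝕜 (g₁ i) (g₁ j) = inner 𝕜 (g₀ i) (g₀ j)) (c d : ι →₀ 𝕜) :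
    inner 𝕜 (linearCombination 𝕜 g₁ c) (linearCombination 𝕜 g₁ d) =
      inner 𝕜 (linearCombination 𝕜 g₀ c) (linearCombination 𝕜 g₀ d) := by
  simp only [linearCombination_apply, Finsupp.sum, sum_inner, inner_sum, inner_smul_left,
    inner_smul_right, h]

theorem exists_linearIsometry_of_inner_eq [CompleteSpace F]
    (hdense : Dense (Submodule.span 𝕜 (Set.range g₀) : Set E))
    (h : ∀ i j, inner 𝕜 (g₁ i) (g₁ j) = inner 𝕜 (g₀ i) (g₀ j)) :
    ∃ T : E →ₗᵢ[𝕜] F, ∀ i, T (g₀ i) = g₁ i := by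
  have hnorm : ∀ c, ‖linearCombination 𝕜 g₁ c‖ = ‖linearCombination 𝕜 g₀ c‖ := fun c => by
    rw [norm_eq_sqrt_re_inner (𝕜 := 𝕜), norm_eq_sqrt_re_inner (𝕜 := 𝕜),
      inner_linearCombination_eq_of_inner_eq h]
  have hrange : DenseRange (linearCombination 𝕜 g₀) := by
    rwa [DenseRange, ← LinearMap.coe_range, range_linearCombination]
  have hbound : ∃ C, ∀ c, ‖linearCombination 𝕜 g₁ c‖ ≤ C * ‖linearCombination 𝕜 g₀ c‖ :=
    ⟨1, fun c => by rw [hnorm, one_mul]⟩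
  set T := (linearCombination 𝕜 g₁).extendOfNorm (linearCombination 𝕜 g₀)
  have hT : ∀ c, T (linearCombination 𝕜 g₀ c) = linearCombination 𝕜 g₁ c :=
    LinearMap.extendOfNorm_eq hrange hbound
  have hT_norm : ∀ x, ‖T x‖ = ‖x‖ := by
    refine hrange.induction ?_ (isClosed_eq (by fun_prop) continuous_norm)
    rintro _ ⟨c, rfl⟩
    rw [hT, hnorm]
  refine ⟨⟨T.toLinearMap, hT_norm⟩, fun i => ?_⟩
  simpa using hT (single i 1)

end InnerEq

theorem adjoint_eq_map_inv_of_adjoint_comp_self {G E : Type*} [Group G]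
    [NormedAddCommGroup E] [InnerProductSpace ℂ E] [CompleteSpace E] {v : G → E →L[ℂ] E}
    (h1 : v 1 = ContinuousLinearMap.id ℂ E) (hmul : ∀ t s, v (t * s) = v t ∘L v s)
    (hisometry : ∀ t, adjoint (v t) ∘L v t = ContinuousLinearMap.id ℂ E) (t : G) :
    adjoint (v t) = v t⁻¹ :=
  left_inv_eq_right_inv (M := E →L[ℂ] E) (hisometry t)
    (show v t ∘L v t⁻¹ = ContinuousLinearMap.id ℂ E by rw [← hmul, mul_inv_cancel, h1])

theorem inner_ksgns_map_map {A H K : Type*} [CStarAlgebra A]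
    [NormedAddCommGroup H] [InnerProductSpace ℂ H] [CompleteSpace H]
    [NormedAddCommGroup K] [InnerProductSpace ℂ K]
    {α : A ≃⋆ₐ[ℂ] A} {β : A → A} {U : H →L[ℂ] H} {φ : A →ₗ[ℂ] H →L[ℂ] H} {ι : A → H → K}
    (hβmul : ∀ a b, β (a * b) = β a * β b) (hβstar : ∀ a, β (star a) = star (β a))
    (hβα : ∀ a, β (α a) = α (β a)) (hU : adjoint U ∘L U = ContinuousLinearMap.id ℂ H)
    (hφ : ∀ a, φ (β a) = U ∘L φ a ∘L adjoint U)
    (hι : ∀ a b ξ η, inner ℂ (ι a ξ) (ι b η) = inner ℂ ξ (φ (star (α a) * b) η))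
    (a b : A) (ξ η : H) :
    inner ℂ (ι (β a) (U ξ)) (ι (β b) (U η)) = inner ℂ (ι a ξ) (ι b η) := by
  have hUU : ∀ ξ, adjoint U (U ξ) = ξ := fun ξ => by rw [← comp_apply, hU, id_apply]
  rw [hι, hι, ← hβα, ← hβstar, ← hβmul, hφ, comp_apply, comp_apply, hUU,
    ← adjoint_inner_right, hUU]

open ContinuousLinearMap in
theorem covariant_ksgns_unitary_v_general
    {G A H₁ K₁ : Type*} [Group G]
    [CStarAlgebra A]
    [NormedAddCommGroup H₁] [InnerProductSpace ℂ H₁] [CompleteSpace H₁]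
    [NormedAddCommGroup K₁] [InnerProductSpace ℂ K₁] [CompleteSpace K₁]
    (α : A ≃⋆ₐ[ℂ] A) (hα : ∀ a : A, α (α a) = a)
    (J₁ : H₁ →L[ℂ] H₁)
    (hJ₁2 : J₁ ∘L J₁ = ContinuousLinearMap.id ℂ H₁)
    -- the induced action `β` of `G` on `A`, commuting with `α`
    (β : G → A → A)
    (hβ1 : ∀ a : A, β 1 a = a)
    (hβmul : ∀ (t s : G) (a : A), β (t * s) a = β t (β s a))
    (hβring : ∀ t : G, ∀ a b : A, β t (a * b) = β t a * β t b)
    (hβstar : ∀ (t : G) (a : A), β t (star a) = star (β t a))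
    (hβα : ∀ (t : G) (a : A), β t (α a) = α (β t a))
    -- `u` is simultaneously unitary and pseudo-unitary on `(H₁,J₁)`
    (u : G → H₁ →L[ℂ] H₁)
    (hu1 : u 1 = ContinuousLinearMap.id ℂ H₁)
    (humul : ∀ t s : G, u (t * s) = u t ∘L u s)
    (huunit : ∀ t : G, adjoint (u t) ∘L u t = ContinuousLinearMap.id ℂ H₁ ∧
      u t ∘L adjoint (u t) = ContinuousLinearMap.id ℂ H₁)
    (huJ : ∀ t : G, J₁ ∘L u t = u t ∘L J₁)
    -- the `α`-CP map `φ`, which is `u`-covariant with respect to `β`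
    (φ : A →ₗ[ℂ] H₁ →L[ℂ] H₁)
    (hφcov : ∀ (t : G) (a : A), φ (β t a) = u t ∘L φ a ∘L adjoint (u t))
    -- the KSGNS space `K₁`, presented by `ι a ξ = a ⊗ ξ + N_φ`
    (ι : A → H₁ → K₁)
    (hι : ∀ (a b : A) (ξ η : H₁),
      (inner ℂ (ι a ξ) (ι b η) : ℂ) = inner ℂ ξ (φ (star (α a) * b) η))
    (hdense : (Submodule.span ℂ {v : K₁ | ∃ (a : A) (ξ : H₁),
      v = ι a ξ}).topologicalClosure = ⊤)
    (J₃ : K₁ →L[ℂ] K₁)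
    (hJ₃ι : ∀ (a : A) (ξ : H₁), J₃ (ι a ξ) = ι (α a) (J₁ ξ))
    (V : H₁ →L[ℂ] K₁) (hV : ∀ ξ : H₁, V ξ = ι 1 (J₁ ξ)) :
    ∃ v : G → K₁ →L[ℂ] K₁,
      (∀ (t : G) (a : A) (ξ : H₁), v t (ι a ξ) = ι (β t a) (u t ξ)) ∧
      (v 1 = ContinuousLinearMap.id ℂ K₁) ∧
      (∀ t s : G, v (t * s) = v t ∘L v s) ∧
      (∀ t : G, adjoint (v t) ∘L v t = ContinuousLinearMap.id ℂ K₁ ∧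
        v t ∘L adjoint (v t) = ContinuousLinearMap.id ℂ K₁) ∧
      (∀ t : G, v t⁻¹ = J₃ ∘L adjoint (v t) ∘L J₃) ∧
      (∀ (t : G) (ξ : H₁), V (u t ξ) = v t (V ξ)) := by
  have hD : Dense (Submodule.span ℂ (Set.range (Function.uncurry ι)) : Set K₁) := by
    rw [Submodule.dense_iff_topologicalClosure_eq_top, ← hdense]
    congr
    ext
    simp [eq_comm]
  have ext_ι : ∀ T T' : K₁ →L[ℂ] K₁, (∀ a ξ, T (ι a ξ) = T' (ι a ξ)) → T = T' :=
    fun T T' h => ext_on hD (by rintro _ ⟨⟨a, ξ⟩, rfl⟩; exact h a ξ)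
  choose T hT using fun t => exists_linearIsometry_of_inner_eq
    (g₁ := fun p : A × H₁ => ι (β t p.1) (u t p.2)) hD fun p q =>
      inner_ksgns_map_map (hβring t) (hβstar t) (hβα t) (huunit t).1 (hφcov t) hι _ _ _ _
  set v : G → K₁ →L[ℂ] K₁ := fun t => (T t).toContinuousLinearMap
  have hv : ∀ t a ξ, v t (ι a ξ) = ι (β t a) (u t ξ) := fun t a ξ => hT t (a, ξ)
  have hv1 : v 1 = ContinuousLinearMap.id ℂ K₁ := ext_ι _ _ fun a ξ => by
    rw [hv, hβ1, hu1, id_apply, id_apply]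
  have hvmul : ∀ t s, v (t * s) = v t ∘L v s := fun t s => ext_ι _ _ fun a ξ => by
    rw [hv, hβmul, humul, comp_apply, comp_apply, hv, hv]
  have hv_isometry : ∀ t, adjoint (v t) ∘L v t = ContinuousLinearMap.id ℂ K₁ := fun t =>
    (norm_map_iff_adjoint_comp_self _).mp (T t).norm_map
  have hadj := adjoint_eq_map_inv_of_adjoint_comp_self hv1 hvmul hv_isometry
  have hJ₃J₃ : J₃ ∘L J₃ = ContinuousLinearMap.id ℂ K₁ := ext_ι _ _ fun a ξ => by
    rw [comp_apply, hJ₃ι, hJ₃ι, hα, ← comp_apply J₁, hJ₁2, id_apply, id_apply]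
  have hJ₃v : ∀ t, J₃ ∘L v t = v t ∘L J₃ := fun t => ext_ι _ _ fun a ξ => by
    rw [comp_apply, comp_apply, hv, hJ₃ι, hJ₃ι, hv, hβα, ← comp_apply J₁, huJ, comp_apply]
  have hβ_one : ∀ t, β t 1 = 1 := fun t => map_one_of_map_mul_of_surjective (hβring t)
    fun a => ⟨β t⁻¹ a, by rw [← hβmul, mul_inv_cancel, hβ1]⟩
  refine ⟨v, hv, hv1, hvmul, fun t => ⟨hv_isometry t, ?_⟩, fun t => ?_, fun t ξ => ?_⟩
  · rw [hadj, ← hvmul, mul_inv_cancel, hv1]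
  · rw [hadj, ← comp_assoc, hJ₃v, comp_assoc, hJ₃J₃, comp_id]
  · rw [hV, hV, hv, hβ_one, ← comp_apply J₁, huJ, comp_apply]

open ContinuousLinearMap in
/-- Lemma 3.4 of the paper: for a `(u',u)`-covariant `φ`-map, with `u` simultaneously
unitary and pseudo-unitary on the Krein space `(H₁,J₁)`, the formula
`v_t (a ⊗ ξ + N_φ) = β_t(a) ⊗ u_t ξ + N_φ` defines a simultaneously unitary and
pseudo-unitary representation `v` of `G` on the KSGNS space `(K₁,J₃)` satisfying
`V_Φ u_t = v_t V_Φ`. -/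
theorem covariant_ksgns_unitary_v
    {G A H₁ K₁ : Type*} [Group G]
    [CStarAlgebra A] [PartialOrder A] [StarOrderedRing A]
    [NormedAddCommGroup H₁] [InnerProductSpace ℂ H₁] [CompleteSpace H₁]
    [NormedAddCommGroup K₁] [InnerProductSpace ℂ K₁] [CompleteSpace K₁]
    (α : A ≃⋆ₐ[ℂ] A) (hα : ∀ a : A, α (α a) = a)
    (J₁ : H₁ →L[ℂ] H₁) (hJ₁sa : adjoint J₁ = J₁)
    (hJ₁2 : J₁ ∘L J₁ = ContinuousLinearMap.id ℂ H₁)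
    -- the induced action `β` of `G` on `A`, commuting with `α`
    (β : G → A → A)
    (hβ1 : ∀ a : A, β 1 a = a)
    (hβmul : ∀ (t s : G) (a : A), β (t * s) a = β t (β s a))
    (hβring : ∀ t : G, ∀ a b : A, β t (a * b) = β t a * β t b)
    (hβstar : ∀ (t : G) (a : A), β t (star a) = star (β t a))
    (hβα : ∀ (t : G) (a : A), β t (α a) = α (β t a))
    -- `u` is simultaneously unitary and pseudo-unitary on `(H₁,J₁)`
    (u : G → H₁ →L[ℂ] H₁)
    (hu1 : u 1 = ContinuousLinearMap.id ℂ H₁)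
    (humul : ∀ t s : G, u (t * s) = u t ∘L u s)
    (huunit : ∀ t : G, adjoint (u t) ∘L u t = ContinuousLinearMap.id ℂ H₁ ∧
      u t ∘L adjoint (u t) = ContinuousLinearMap.id ℂ H₁)
    (huJ : ∀ t : G, J₁ ∘L u t = u t ∘L J₁)
    -- the `α`-CP map `φ`, which is `u`-covariant with respect to `β`
    (φ : A →ₗ[ℂ] H₁ →L[ℂ] H₁)
    (hφcov : ∀ (t : G) (a : A), φ (β t a) = u t ∘L φ a ∘L adjoint (u t))
    -- the KSGNS space `K₁`, presented by `ι a ξ = a ⊗ ξ + N_φ`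
    (ι : A → H₁ → K₁)
    (hadd₁ : ∀ (a b : A) (ξ : H₁), ι (a + b) ξ = ι a ξ + ι b ξ)
    (hadd₂ : ∀ (a : A) (ξ η : H₁), ι a (ξ + η) = ι a ξ + ι a η)
    (hsmul : ∀ (c : ℂ) (a : A) (ξ : H₁), ι (c • a) ξ = c • ι a ξ)
    (hι : ∀ (a b : A) (ξ η : H₁),
      (inner ℂ (ι a ξ) (ι b η) : ℂ) = inner ℂ ξ (φ (star (α a) * b) η))
    (hdense : (Submodule.span ℂ {v : K₁ | ∃ (a : A) (ξ : H₁),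
      v = ι a ξ}).topologicalClosure = ⊤)
    (J₃ : K₁ →L[ℂ] K₁)
    (hJ₃ι : ∀ (a : A) (ξ : H₁), J₃ (ι a ξ) = ι (α a) (J₁ ξ))
    (V : H₁ →L[ℂ] K₁) (hV : ∀ ξ : H₁, V ξ = ι 1 (J₁ ξ)) :
    ∃ v : G → K₁ →L[ℂ] K₁,
      (∀ (t : G) (a : A) (ξ : H₁), v t (ι a ξ) = ι (β t a) (u t ξ)) ∧
      (v 1 = ContinuousLinearMap.id ℂ K₁) ∧
      (∀ t s : G, v (t * s) = v t ∘L v s) ∧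
      (∀ t : G, adjoint (v t) ∘L v t = ContinuousLinearMap.id ℂ K₁ ∧
        v t ∘L adjoint (v t) = ContinuousLinearMap.id ℂ K₁) ∧
      (∀ t : G, v t⁻¹ = J₃ ∘L adjoint (v t) ∘L J₃) ∧
      (∀ (t : G) (ξ : H₁), V (u t ξ) = v t (V ξ)) :=
  covariant_ksgns_unitary_v_general α hα J₁ hJ₁2 β hβ1 hβmul hβring hβstar hβα u hu1 humul huunit
    huJ φ hφcov ι hι hdense J₃ hJ₃ι V hV
end
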